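/- arXiv:2604.13088 — 2 statements merged into one kernel-verified Lean document; each statement's English description precedes it below -/
import Mathlib

section
/- Let A > 0 and ε > 0 be real numbers, let w be a real number with w > 1 + ε or w < 1 − ε, and let w̄ = max(1 − ε, min(w, 1 + ε)) be its clipped value. Then (−A)·max(w, w̄) + A·min(w, w̄) < 0; in particular this aggregated coefficient is nonzero. -/
/-- Asymmetric clipping breaks intra-group cancellation: for a shared ratio `w`
outside the clipping range, the aggregated sign-aware coefficient
`(-A) * max w w̄ + A * min w w̄` is strictly negative, hence nonzero. -/
theorem asymmetric_clipping_breaks_cancellation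
    (A ε w : ℝ) (hA : 0 < A) (hε : 0 < ε)
    (hw : w > 1 + ε ∨ w < 1 - ε) :
    (-A) * max w (max (1 - ε) (min w (1 + ε)))
      + A * min w (max (1 - ε) (min w (1 + ε))) < 0 ∧
    (-A) * max w (max (1 - ε) (min w (1 + ε)))
      + A * min w (max (1 - ε) (min w (1 + ε))) ≠ 0 := by
  have h : (-A) * max w (max (1 - ε) (min w (1 + ε)))
      + A * min w (max (1 - ε) (min w (1 + ε))) < 0 := by
    rcases hw with h | h
    · have h1 : min w (1 + ε) = 1 + ε := min_eq_right h.le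
      have h2 : max (1 - ε) (1 + ε) = 1 + ε := max_eq_right (by linarith)
      rw [h1, h2, max_eq_left h.le, min_eq_right h.le]
      nlinarith
    · have h1 : min w (1 + ε) = w := min_eq_left (by linarith)
      have h2 : max (1 - ε) w = 1 - ε := max_eq_left h.le
      rw [h1, h2, max_eq_right h.le, min_eq_left h.le]
      nlinarith
  exact ⟨h, ne_of_lt h⟩
end

section
/- Let G be a natural number, Â : Fin G → ℝ with ∑_i Â_i = 0, ε > 0, and s : Fin G → ℝ with s_i ≥ ε for all i. Let S_P = ∑_{i : Â_i > 0} Â_i · s_i, S_N = ∑_{i : Â_i < 0} Â_i · s_i, and suppose δ := ∑_i Â_i · s_i > 0. Then: S_P > 0, S_N < 0, the scaling coefficient α := −S_N / S_P satisfies 0 < α < 1, and the rebalanced weights s̃ defined by s̃_i = α · s_i if Â_i > 0 and s̃_i = s_i otherwise satisfy ∑_i Â_i · s̃_i = 0 and s̃_i ≥ α · ε > 0 for all i. -/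
/-- Truncate-and-Rebalance (Positive Orth-Proj, closed-form): if the centered
advantages have positive inner product `δ` with the truncated weights
`s i ≥ ε > 0`, then `S_P > 0`, `S_N < 0`, the scaling factor
`α = -S_N / S_P` lies in `(0,1)`, the rebalanced weights restore exact
orthogonality, and they remain bounded below by `α * ε > 0`. -/
theorem truncate_and_rebalance
    (G : ℕ) (Ahat : Fin G → ℝ) (hAhat : ∑ i, Ahat i = 0)
    (ε : ℝ) (hε : 0 < ε) (s : Fin G → ℝ) (hs : ∀ i, ε ≤ s i)
    (hδ : 0 < ∑ i, Ahat i * s i) :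
    (0 < ∑ i ∈ Finset.univ.filter (fun i => 0 < Ahat i), Ahat i * s i) ∧
    ((∑ i ∈ Finset.univ.filter (fun i => Ahat i < 0), Ahat i * s i) < 0) ∧
    (0 < -(∑ i ∈ Finset.univ.filter (fun i => Ahat i < 0), Ahat i * s i) /
          (∑ i ∈ Finset.univ.filter (fun i => 0 < Ahat i), Ahat i * s i) ∧
     -(∑ i ∈ Finset.univ.filter (fun i => Ahat i < 0), Ahat i * s i) /
          (∑ i ∈ Finset.univ.filter (fun i => 0 < Ahat i), Ahat i * s i) < 1) ∧
    (∑ i, Ahat i *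
        (if 0 < Ahat i then
          (-(∑ j ∈ Finset.univ.filter (fun j => Ahat j < 0), Ahat j * s j) /
            (∑ j ∈ Finset.univ.filter (fun j => 0 < Ahat j), Ahat j * s j)) * s i
        else s i) = 0) ∧
    (∀ i : Fin G,
      (-(∑ j ∈ Finset.univ.filter (fun j => Ahat j < 0), Ahat j * s j) /
          (∑ j ∈ Finset.univ.filter (fun j => 0 < Ahat j), Ahat j * s j)) * ε
        ≤ (if 0 < Ahat i then
            (-(∑ j ∈ Finset.univ.filter (fun j => Ahat j < 0), Ahat j * s j) /
              (∑ j ∈ Finset.univ.filter (fun j => 0 < Ahat j), Ahat j * s j)) * s i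
          else s i)) ∧
    (0 < (-(∑ j ∈ Finset.univ.filter (fun j => Ahat j < 0), Ahat j * s j) /
          (∑ j ∈ Finset.univ.filter (fun j => 0 < Ahat j), Ahat j * s j)) * ε) := by
  classical
  set SP := ∑ i ∈ Finset.univ.filter (fun i => 0 < Ahat i), Ahat i * s i with hSPdef
  set SN := ∑ i ∈ Finset.univ.filter (fun i => Ahat i < 0), Ahat i * s i with hSNdef
  -- complement sum equals SN
  have hcomp : ∑ i ∈ Finset.univ.filter (fun i => ¬ 0 < Ahat i), Ahat i * s i = SN := by
    rw [hSNdef]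
    refine (Finset.sum_subset ?_ ?_).symm
    · intro i hi
      simp only [Finset.mem_filter, Finset.mem_univ, true_and] at hi ⊢
      linarith
    · intro i hi hni
      simp only [Finset.mem_filter, Finset.mem_univ, true_and] at hi hni
      have : Ahat i = 0 := le_antisymm (not_lt.mp hi) (not_lt.mp hni)
      simp [this]
  have hsplit : ∑ i, Ahat i * s i = SP + SN := by
    rw [← Finset.sum_filter_add_sum_filter_not Finset.univ (fun i => 0 < Ahat i)
      (fun i => Ahat i * s i), hcomp]
  rw [hsplit] at hδ
  -- there is a negative advantage
  have hexneg : ∃ i, Ahat i < 0 := by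
    by_contra h
    push_neg at h
    have hall : ∀ i ∈ Finset.univ, Ahat i = 0 := by
      intro i _
      exact (Finset.sum_eq_zero_iff_of_nonneg (fun i _ => h i)).mp hAhat i (Finset.mem_univ i)
    have h1 : SP = 0 := Finset.sum_eq_zero (fun i _ => by simp [hall i (Finset.mem_univ i)])
    have h2 : SN = 0 := Finset.sum_eq_zero (fun i _ => by simp [hall i (Finset.mem_univ i)])
    linarith
  obtain ⟨i₀, hi₀⟩ := hexneg
  have hSN : SN < 0 := by
    have : ∑ i ∈ Finset.univ.filter (fun i => Ahat i < 0), Ahat i * s i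
        < ∑ i ∈ Finset.univ.filter (fun i => Ahat i < 0), (0:ℝ) := by
      apply Finset.sum_lt_sum_of_nonempty
      · exact ⟨i₀, by simp [hi₀]⟩
      · intro i hi
        simp only [Finset.mem_filter, Finset.mem_univ, true_and] at hi
        have := hs i
        nlinarith
    simpa [hSNdef] using this
  have hSP : 0 < SP := by linarith
  have hα0 : 0 < -SN / SP := div_pos (by linarith) hSP
  have hα1 : -SN / SP < 1 := (div_lt_one hSP).mpr (by linarith)
  refine ⟨hSP, hSN, ⟨hα0, hα1⟩, ?_, ?_, ?_⟩
  · rw [← Finset.sum_filter_add_sum_filter_not Finset.univ (fun i => 0 < Ahat i)]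
    have h1 : ∑ i ∈ Finset.univ.filter (fun i => 0 < Ahat i),
        Ahat i * (if 0 < Ahat i then (-SN / SP) * s i else s i)
        = (-SN / SP) * SP := by
      rw [hSPdef, Finset.mul_sum]
      apply Finset.sum_congr rfl
      intro i hi
      simp only [Finset.mem_filter, Finset.mem_univ, true_and] at hi
      rw [if_pos hi]; ring
    have h2 : ∑ i ∈ Finset.univ.filter (fun i => ¬ 0 < Ahat i),
        Ahat i * (if 0 < Ahat i then (-SN / SP) * s i else s i) = SN := by
      rw [← hcomp]
      apply Finset.sum_congr rfl
      intro i hi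
      simp only [Finset.mem_filter, Finset.mem_univ, true_and] at hi
      rw [if_neg hi]
    rw [h1, h2, div_mul_cancel₀ _ (ne_of_gt hSP)]
    ring
  · intro i
    by_cases h : 0 < Ahat i
    · rw [if_pos h]
      exact mul_le_mul_of_nonneg_left (hs i) hα0.le
    · rw [if_neg h]
      have : (-SN / SP) * ε ≤ 1 * ε := mul_le_mul_of_nonneg_right hα1.le hε.le
      calc (-SN / SP) * ε ≤ 1 * ε := this
        _ = ε := one_mul ε
        _ ≤ s i := hs i
  · exact mul_pos hα0 hε
end
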